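/- arXiv:2604.11448 — 3 statements merged into one kernel-verified Lean document; each statement's English description precedes it below -/
import Mathlib

section
/- Let 1 < p < ∞ and let A : (a,b) → [0,∞) be measurable with ∫_a^b A(t)^{-1/(p-1)} dt = +∞ (with the convention that the integrand is +∞ where A vanishes). Then the infimum of ∫_a^b |v'(t)|^p A(t) dt over all absolutely continuous v on [a,b] with v(a)=0, v(b)=1 equals 0. -/
open MeasureTheory Set Filter
open scoped ENNReal Topology

/-!
Truncate the dual weight `B = A^{-1/(p-1)}` at height `k` and take the normalized profile
`v' = min B k / I_k`, where `I_k = ∫ min B k`. Since `min B k ≤ A^{-1/(p-1)}`, one has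
`(min B k)^p A ≤ min B k` pointwise, so the energy of `v'` is at most `I_k^{1-p}`, and
`I_k → ∞` by monotone convergence.
-/

theorem ENNReal.iSup_min_natCast (x : ℝ≥0∞) : ⨆ n : ℕ, min x n = x := by
  rw [← inf_iSup_eq]
  simp [ENNReal.iSup_natCast]

section Truncation

variable {α : Type*} [MeasurableSpace α] {μ : Measure α} [IsFiniteMeasure μ] {f : α → ℝ≥0∞}

theorem integrable_toReal_min_natCast (hf : AEMeasurable f μ) (n : ℕ) :
    Integrable (fun x => (min (f x) n).toReal) μ := by
  refine Integrable.of_bound (C := n)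
    (hf.min aemeasurable_const).ennreal_toReal.aestronglyMeasurable (ae_of_all _ fun x => ?_)
  rw [Real.norm_of_nonneg ENNReal.toReal_nonneg]
  exact ENNReal.toReal_le_of_le_ofReal (Nat.cast_nonneg n) (by simp)

theorem tendsto_integral_toReal_min_natCast_atTop (hf : AEMeasurable f μ) (h : ∫⁻ x, f x ∂μ = ∞) :
    Tendsto (fun n : ℕ => ∫ x, (min (f x) n).toReal ∂μ) atTop atTop := by
  set L : ℕ → ℝ≥0∞ := fun n => ∫⁻ x, min (f x) n ∂μ
  have hmono : Monotone fun (n : ℕ) x => min (f x) n := fun m n hmn x =>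
    min_le_min_left _ (Nat.cast_le.mpr hmn)
  have hsup : ⨆ n, L n = ∞ := by
    rw [← lintegral_iSup' (fun n => hf.min aemeasurable_const)
      (ae_of_all _ fun x m n hmn => hmono hmn x)]
    simpa only [ENNReal.iSup_min_natCast] using h
  have hfin (n : ℕ) : L n ≠ ∞ :=
    ne_top_of_le_ne_top (ENNReal.mul_ne_top (ENNReal.natCast_ne_top n) (measure_ne_top μ univ))
      ((lintegral_mono fun x => min_le_right (f x) n).trans_eq (lintegral_const _))
  have hL (n : ℕ) : ∫ x, (min (f x) n).toReal ∂μ = (L n).toReal :=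
    integral_toReal (hf.min aemeasurable_const) (ae_of_all _ fun x =>
      (min_le_right _ _).trans_lt (ENNReal.natCast_lt_top n))
  simp only [hL]
  refine tendsto_atTop_atTop_of_monotone
    (fun m n hmn => ENNReal.toReal_mono (hfin n) (lintegral_mono (hmono hmn))) fun M => ?_
  obtain ⟨n, hn⟩ := lt_iSup_iff.mp (hsup ▸ ENNReal.ofReal_lt_top : ENNReal.ofReal M < ⨆ n, L n)
  exact ⟨n, (ENNReal.ofReal_le_iff_le_toReal (hfin n)).mp hn.le⟩

end Truncation

/-- The bound is taken in `ℝ≥0∞` so that at `x = 0`, where `x ^ (-(1 / (p - 1))) = ∞`, it is no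
constraint on `y`. -/
theorem Real.rpow_mul_le_self_of_ofReal_le_rpow {p x y : ℝ} (hp : 1 < p) (hx : 0 ≤ x) (hy : 0 ≤ y)
    (hxy : ENNReal.ofReal y ≤ ENNReal.ofReal x ^ (-(1 / (p - 1)))) : y ^ p * x ≤ y := by
  rcases hx.eq_or_lt with rfl | hx
  · simpa using hy
  rw [ENNReal.ofReal_rpow_of_pos hx, ENNReal.ofReal_le_ofReal_iff (by positivity)] at hxy
  have hp1 : 0 < p - 1 := by linarith
  have hpow : y ^ (p - 1) ≤ x⁻¹ := by
    calc y ^ (p - 1) ≤ (x ^ (-(1 / (p - 1)))) ^ (p - 1) := by gcongr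
      _ = x⁻¹ := by
        rw [← Real.rpow_mul hx.le, ← Real.rpow_neg_one]
        congr 1
        field_simp
  calc y ^ p * x = y ^ (p - 1) * x * y := by
        rw [mul_right_comm, ← Real.rpow_add_one' hy (by linarith), sub_add_cancel]
    _ ≤ x⁻¹ * x * y := by gcongr
    _ = y := by rw [inv_mul_cancel₀ hx.ne', one_mul]

theorem exists_normalized_profile_energy_le {p a b : ℝ} {A g : ℝ → ℝ} (hab : a ≤ b)
    (hg : IntegrableOn g (Ioo a b)) (hg0 : ∀ t ∈ Ioo a b, 0 ≤ g t)
    (hgA : ∀ t ∈ Ioo a b, g t ^ p * A t ≤ g t) (hI : 0 < ∫ t in Ioo a b, g t) :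
    ∃ v' : ℝ → ℝ, IntervalIntegrable v' volume a b ∧ ∫ t in a..b, v' t = 1 ∧
      ∫⁻ t in Ioo a b, ENNReal.ofReal (|v' t| ^ p * A t) ≤
        ENNReal.ofReal ((∫ t in Ioo a b, g t) ^ (1 - p)) := by
  set I := ∫ t in Ioo a b, g t
  refine ⟨fun t => g t / I, ?_, ?_, ?_⟩
  · rw [intervalIntegrable_iff_integrableOn_Ioo_of_le hab]
    exact hg.div_const I
  · rw [intervalIntegral.integral_of_le hab, integral_Ioc_eq_integral_Ioo, integral_div,
      div_self hI.ne']
  have hpointwise : ∀ t ∈ Ioo a b, |g t / I| ^ p * A t ≤ I ^ (-p) * g t := fun t ht => by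
    rw [abs_of_nonneg (div_nonneg (hg0 t ht) hI.le), Real.div_rpow (hg0 t ht) hI.le,
      Real.rpow_neg hI.le, div_mul_eq_mul_div, div_eq_inv_mul]
    exact mul_le_mul_of_nonneg_left (hgA t ht) (by positivity)
  calc ∫⁻ t in Ioo a b, ENNReal.ofReal (|g t / I| ^ p * A t)
      ≤ ∫⁻ t in Ioo a b, ENNReal.ofReal (I ^ (-p) * g t) :=
        setLIntegral_mono' measurableSet_Ioo fun t ht => ENNReal.ofReal_le_ofReal (hpointwise t ht)
    _ = ENNReal.ofReal (∫ t in Ioo a b, I ^ (-p) * g t) :=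
        (ofReal_integral_eq_lintegral_ofReal (hg.const_mul _) (ae_restrict_of_forall_mem
          measurableSet_Ioo fun t ht => mul_nonneg (by positivity) (hg0 t ht))).symm
    _ = ENNReal.ofReal (I ^ (1 - p)) := by
      rw [integral_const_mul, ← Real.rpow_add_one hI.ne', neg_add_eq_sub]

/-- if the reduced resistance diverges, the infimum of the
weighted `p`-energy over admissible absolutely continuous profiles
(encoded by their derivatives `v'`, interval integrable with
`∫_a^b v' = 1`) equals `0`. -/
theorem stmt2 (p a b : ℝ) (hp : 1 < p) (hab : a < b)
    (A : ℝ → ℝ) (hAmeas : Measurable A) (hA0 : ∀ t ∈ Ioo a b, 0 ≤ A t)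
    (hdiv : (∫⁻ t in Ioo a b, (ENNReal.ofReal (A t)) ^ (-(1 / (p - 1)))) = ⊤) :
    sInf {E : ℝ≥0∞ | ∃ v' : ℝ → ℝ, IntervalIntegrable v' volume a b ∧
        (∫ t in a..b, v' t) = 1 ∧
        E = ∫⁻ t in Ioo a b, ENNReal.ofReal (|v' t| ^ p * A t)} = 0 := by
  set W : ℝ → ℝ≥0∞ := fun t => ENNReal.ofReal (A t) ^ (-(1 / (p - 1)))
  have hW : Measurable W := hAmeas.ennreal_ofReal.pow_const _
  set I : ℕ → ℝ := fun k => ∫ t in Ioo a b, (min (W t) k).toReal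
  have hI : Tendsto I atTop atTop :=
    tendsto_integral_toReal_min_natCast_atTop hW.aemeasurable hdiv
  have hlim : Tendsto (fun k => ENNReal.ofReal (I k ^ (1 - p))) atTop (𝓝 0) := by
    have := (tendsto_rpow_neg_atTop (by linarith : 0 < p - 1)).comp hI
    simpa [Function.comp_def] using ENNReal.tendsto_ofReal this
  refine le_antisymm (ge_of_tendsto hlim ?_) bot_le
  filter_upwards [hI.eventually_gt_atTop 0] with k hk
  have hkey : ∀ t ∈ Ioo a b, (min (W t) k).toReal ^ p * A t ≤ (min (W t) k).toReal :=
    fun t ht => Real.rpow_mul_le_self_of_ofReal_le_rpow hp (hA0 t ht) ENNReal.toReal_nonneg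
      (by rw [ENNReal.ofReal_toReal (min_lt_of_right_lt (ENNReal.natCast_lt_top k)).ne]
          exact min_le_left _ _)
  obtain ⟨v', hv', hv'1, hE⟩ := exists_normalized_profile_energy_le hab.le
    (integrable_toReal_min_natCast hW.aemeasurable k) (fun t _ => ENNReal.toReal_nonneg) hkey hk
  exact sInf_le_of_le ⟨v', hv', hv'1, rfl⟩ hE
end

section
/- Let 1 < p < ∞ and let A : (a,b) → [0,∞) be measurable. If A vanishes on a subset of (a,b) of positive Lebesgue measure, then the infimum of ∫_a^b |v'(t)|^p A(t) dt over absolutely continuous v with v(a)=0, v(b)=1 equals 0. -/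
open MeasureTheory Set
open scoped ENNReal

/-! The weight vanishes on `S = {t ∈ (a,b) | A t = 0}`, so the profile whose derivative is the
normalized indicator `𝟙_S / |S|` runs from `0` to `1` while its energy density `|v'|^p A` is
identically zero. -/

theorem integral_indicator_inv_measureReal {α : Type*} [MeasurableSpace α] {μ : Measure α}
    {S : Set α} (hS : MeasurableSet S) (h0 : μ S ≠ 0) (hfin : μ S ≠ ∞) :
    ∫ x, S.indicator (fun _ => (μ.real S)⁻¹) x ∂μ = 1 := by
  rw [integral_indicator_const _ hS, smul_eq_mul,
    mul_inv_cancel₀ ((measureReal_ne_zero_iff hfin).2 h0)]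

theorem intervalIntegral_indicator_inv_volume_real {a b : ℝ} (hab : a ≤ b) {S : Set ℝ}
    (hS : MeasurableSet S) (hSab : S ⊆ Ioc a b) (h0 : volume S ≠ 0) :
    ∫ t in a..b, S.indicator (fun _ => (volume.real S)⁻¹) t = 1 := by
  have hfin : volume S ≠ ∞ :=
    ne_top_of_le_ne_top (by simp [Real.volume_Ioc]) (measure_mono hSab)
  rw [intervalIntegral.integral_of_le hab, ← integral_indicator measurableSet_Ioc,
    indicator_indicator, inter_eq_right.2 hSab,
    integral_indicator_inv_measureReal hS h0 hfin]

theorem abs_indicator_rpow_mul_eq_zero {α : Type*} {S : Set α} {A : α → ℝ}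
    (hA : ∀ t ∈ S, A t = 0) {p : ℝ} (hp : p ≠ 0) (c : ℝ) (t : α) :
    |S.indicator (fun _ => c) t| ^ p * A t = 0 := by
  by_cases ht : t ∈ S
  · rw [hA t ht, mul_zero]
  · rw [indicator_of_notMem ht, abs_zero, Real.zero_rpow hp, zero_mul]

theorem stmt8_general (p a b : ℝ) (hp : 1 < p) (hab : a < b)
    (A : ℝ → ℝ) (hAmeas : Measurable A)
    (hvanish : 0 < volume {t ∈ Ioo a b | A t = 0}) :
    sInf {E : ℝ≥0∞ | ∃ v' : ℝ → ℝ, IntervalIntegrable v' volume a b ∧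
        (∫ t in a..b, v' t) = 1 ∧
        E = ∫⁻ t in Ioo a b, ENNReal.ofReal (|v' t| ^ p * A t)} = 0 := by
  set S : Set ℝ := {t ∈ Ioo a b | A t = 0}
  have hSmeas : MeasurableSet S := measurableSet_Ioo.inter (hAmeas (measurableSet_singleton 0))
  have hSab : S ⊆ Ioc a b := fun t ht => Ioo_subset_Ioc_self ht.1
  have hint : ∫ t in a..b, S.indicator (fun _ => (volume.real S)⁻¹) t = 1 :=
    intervalIntegral_indicator_inv_volume_real hab.le hSmeas hSab hvanish.ne'
  refine le_antisymm (sInf_le ⟨_, ?_, hint, ?_⟩) zero_le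
  · exact intervalIntegral.intervalIntegrable_of_integral_ne_zero (by simp [hint])
  · simp [abs_indicator_rpow_mul_eq_zero (fun t (ht : t ∈ S) => ht.2) (by linarith : p ≠ 0)]

/-- if the weight `A` vanishes on a subset of `(a,b)` of
positive Lebesgue measure, the infimum of the weighted `p`-energy over
admissible absolutely continuous profiles equals `0`. -/
theorem stmt8 (p a b : ℝ) (hp : 1 < p) (hab : a < b)
    (A : ℝ → ℝ) (hAmeas : Measurable A) (hA0 : ∀ t ∈ Ioo a b, 0 ≤ A t)
    (hvanish : 0 < volume {t ∈ Ioo a b | A t = 0}) :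
    sInf {E : ℝ≥0∞ | ∃ v' : ℝ → ℝ, IntervalIntegrable v' volume a b ∧
        (∫ t in a..b, v' t) = 1 ∧
        E = ∫⁻ t in Ioo a b, ENNReal.ofReal (|v' t| ^ p * A t)} = 0 :=
  stmt8_general p a b hp hab A hAmeas hvanish
end

section
/- Let 1 < p < ∞ and let A : (a,b) → [0,∞) be measurable. Then the infimum of ∫_a^b |v'|^p A dt over absolutely continuous v on [a,b] with v(a)=0, v(b)=1 and finite energy equals the infimum of the same functional over Lipschitz w : [a,b] → ℝ with w(a)=0, w(b)=1. In both cases the common value is (∫_a^b A(t)^{-1/(p-1)} dt)^{1-p}, interpreted as 0 when the integral diverges. -/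
open MeasureTheory Set Filter
open scoped ENNReal Topology

/-! With `R = ∫ A^{-1/(p-1)}`, Hölder's inequality with exponents `p` and `p/(p-1)` applied
to `|v'| = (|v'| A^{1/p}) · A^{-1/p}` gives `1 ≤ (∫ |v'|)^p ≤ E(v) · R^{p-1}`, i.e.
`R^{1-p} ≤ E(v)`. Conversely, for `B = A^{-1/(p-1)}`, `B_k = min B k` and `c_k = ∫ B_k`, the
bounded derivative `B_k / c_k` has energy at most `c_k^{1-p}` since `B_k^p A ≤ B_k`, and
`c_k ↑ R` by monotone convergence. -/

namespace ENNReal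

variable {p : ℝ}

theorem rpow_mul_le_self_of_le_rpow_neg (hp : 1 < p) {x y : ℝ≥0∞}
    (h : y ≤ x ^ (-(1 / (p - 1)))) : y ^ p * x ≤ y := by
  have hx : y ^ (p - 1) * x ≤ 1 := calc
    y ^ (p - 1) * x ≤ (x ^ (-(1 / (p - 1)))) ^ (p - 1) * x := by gcongr
    _ = x⁻¹ * x := by
      rw [← rpow_mul, neg_mul, one_div_mul_cancel (by linarith), rpow_neg_one]
    _ ≤ 1 := ENNReal.inv_mul_le_one x
  calc y ^ p * x = y ^ (1 + (p - 1)) * x := by rw [add_sub_cancel]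
    _ = y * (y ^ (p - 1) * x) := by
        rw [rpow_add_of_nonneg _ _ zero_le_one (by linarith), rpow_one, mul_assoc]
    _ ≤ y := mul_le_of_le_one_right' hx

theorem rpow_one_sub_le_of_one_le_mul_rpow {E R : ℝ≥0∞} (h : 1 ≤ E * R ^ (p - 1)) :
    R ^ (1 - p) ≤ E := by
  rcases eq_or_ne E ⊤ with rfl | hE
  · exact le_top
  rw [show 1 - p = -(p - 1) by ring, rpow_neg,
    inv_le_iff_le_mul (fun h => absurd h hE) (fun _ hE0 => by simp [hE0] at h), mul_comm]
  exact h

end ENNReal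

section WeightedEnergy

variable {α : Type*} [MeasurableSpace α] {μ : Measure α} {p : ℝ} {w g : α → ℝ≥0∞}

noncomputable def pResistance (p : ℝ) (μ : Measure α) (w : α → ℝ≥0∞) : ℝ≥0∞ :=
  ∫⁻ t, w t ^ (-(1 / (p - 1))) ∂μ

noncomputable def pEnergy (p : ℝ) (μ : Measure α) (w g : α → ℝ≥0∞) : ℝ≥0∞ :=
  ∫⁻ t, g t ^ p * w t ∂μ

theorem lintegral_rpow_le_pEnergy_mul_pResistance (hp : 1 < p) (hg : AEMeasurable g μ)
    (hw : AEMeasurable w μ) (hw0 : ∀ᵐ t ∂μ, w t ≠ 0) (hwt : ∀ᵐ t ∂μ, w t ≠ ⊤) :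
    (∫⁻ t, g t ∂μ) ^ p ≤ pEnergy p μ w g * pResistance p μ w ^ (p - 1) := by
  have hp0 : 0 < p := by linarith
  have hpq : p.HolderConjugate (p / (p - 1)) :=
    (Real.holderConjugate_iff_eq_conjExponent hp).2 rfl
  have hsplit : ∀ᵐ t ∂μ, g t = g t * w t ^ (1 / p) * w t ^ (-(1 / p)) := by
    filter_upwards [hw0, hwt] with t h0 ht
    rw [mul_assoc, ← ENNReal.rpow_add _ _ h0 ht, add_neg_cancel, ENNReal.rpow_zero, mul_one]
  have hHolder := ENNReal.lintegral_mul_le_Lp_mul_Lq μ hpq (hg.mul (hw.pow_const (1 / p)))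
    (hw.pow_const (-(1 / p)))
  have hE : ∫⁻ t, (g t * w t ^ (1 / p)) ^ p ∂μ = pEnergy p μ w g := by
    refine lintegral_congr fun t => ?_
    rw [ENNReal.mul_rpow_of_nonneg _ _ hp0.le, ← ENNReal.rpow_mul, one_div_mul_cancel hp0.ne',
      ENNReal.rpow_one]
  have hR : ∫⁻ t, (w t ^ (-(1 / p))) ^ (p / (p - 1)) ∂μ = pResistance p μ w := by
    refine lintegral_congr fun t => ?_
    rw [← ENNReal.rpow_mul]
    congr 1
    field_simp
  rw [lintegral_congr_ae hsplit]
  calc (∫⁻ t, g t * w t ^ (1 / p) * w t ^ (-(1 / p)) ∂μ) ^ p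
      ≤ (pEnergy p μ w g ^ (1 / p) * pResistance p μ w ^ ((p - 1) / p)) ^ p := by
        gcongr
        simpa only [Pi.mul_apply, one_div_div, hE, hR] using hHolder
    _ = pEnergy p μ w g * pResistance p μ w ^ (p - 1) := by
        rw [ENNReal.mul_rpow_of_nonneg _ _ hp0.le, ← ENNReal.rpow_mul, ← ENNReal.rpow_mul,
          one_div_mul_cancel hp0.ne', div_mul_cancel₀ _ hp0.ne', ENNReal.rpow_one]

theorem pResistance_rpow_one_sub_le_pEnergy (hp : 1 < p) (hg : AEMeasurable g μ)
    (hw : AEMeasurable w μ) (hwt : ∀ᵐ t ∂μ, w t ≠ ⊤) (hg1 : 1 ≤ ∫⁻ t, g t ∂μ) :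
    pResistance p μ w ^ (1 - p) ≤ pEnergy p μ w g := by
  rcases eq_or_ne (pResistance p μ w) ⊤ with hR | hR
  · rw [hR, ENNReal.top_rpow_of_neg (by linarith)]
    exact zero_le
  -- a finite resistance forces `w ≠ 0` a.e., since `0 ^ (-(1 / (p - 1))) = ⊤`
  have hw0 : ∀ᵐ t ∂μ, w t ≠ 0 := by
    filter_upwards [ae_lt_top' (hw.pow_const _) hR] with t ht h0
    have hexp : -(1 / (p - 1)) < 0 := neg_neg_iff_pos.2 (one_div_pos.2 (by linarith))
    rw [h0, ENNReal.zero_rpow_of_neg hexp] at ht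
    exact lt_irrefl _ ht
  refine ENNReal.rpow_one_sub_le_of_one_le_mul_rpow ?_
  calc 1 ≤ (∫⁻ t, g t ∂μ) ^ p := ENNReal.one_le_rpow hg1 (by linarith)
    _ ≤ _ := lintegral_rpow_le_pEnergy_mul_pResistance hp hg hw hw0 hwt

theorem pEnergy_div_lintegral_le (hp : 1 < p) {y : α → ℝ≥0∞}
    (hy : ∀ t, y t ≤ w t ^ (-(1 / (p - 1)))) (hc0 : ∫⁻ t, y t ∂μ ≠ 0)
    (hct : ∫⁻ t, y t ∂μ ≠ ⊤) :
    pEnergy p μ w (fun t => y t / ∫⁻ t, y t ∂μ) ≤ (∫⁻ t, y t ∂μ) ^ (1 - p) := by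
  set c := ∫⁻ t, y t ∂μ
  have hcp : (c ^ p)⁻¹ ≠ ⊤ := by
    simp [hc0, hct, (by linarith : 0 < p)]
  calc pEnergy p μ w (fun t => y t / c) = ∫⁻ t, y t ^ p * w t * (c ^ p)⁻¹ ∂μ := by
        refine lintegral_congr fun t => ?_
        rw [ENNReal.div_rpow_of_nonneg _ _ (by linarith), div_eq_mul_inv, mul_right_comm]
    _ ≤ ∫⁻ t, y t * (c ^ p)⁻¹ ∂μ :=
        lintegral_mono fun t => by
          gcongr
          exact ENNReal.rpow_mul_le_self_of_le_rpow_neg hp (hy t)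
    _ = c ^ (1 - p) := by
        rw [lintegral_mul_const' _ _ hcp, ← ENNReal.rpow_neg, sub_eq_add_neg,
          ENNReal.rpow_add _ _ hc0 hct, ENNReal.rpow_one]

theorem tendsto_lintegral_min_natCast {f : α → ℝ≥0∞} (hf : AEMeasurable f μ) :
    Tendsto (fun k : ℕ => ∫⁻ t, min (f t) k ∂μ) atTop (𝓝 (∫⁻ t, f t ∂μ)) := by
  refine lintegral_tendsto_of_tendsto_of_monotone (fun k => hf.min aemeasurable_const)
    (ae_of_all _ fun t m n hmn => min_le_min_left _ (by exact_mod_cast hmn))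
    (ae_of_all _ fun t => ?_)
  simpa using (tendsto_const_nhds (x := f t)).min ENNReal.tendsto_nat_nhds_top

end WeightedEnergy

section Interval

variable {p a b : ℝ} {A : ℝ → ℝ}

theorem lintegral_ofReal_abs_rpow_mul_eq_pEnergy (hp : 0 ≤ p) (μ : Measure ℝ) (v : ℝ → ℝ) :
    ∫⁻ t, ENNReal.ofReal (|v t| ^ p * A t) ∂μ
      = pEnergy p μ (fun t => ENNReal.ofReal (A t)) (fun t => ENNReal.ofReal |v t|) :=
  lintegral_congr fun t => by
    rw [ENNReal.ofReal_mul (by positivity), ENNReal.ofReal_rpow_of_nonneg (abs_nonneg _) hp]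

theorem one_le_lintegral_ofReal_abs (hab : a ≤ b) {v : ℝ → ℝ} (h : ∫ t in a..b, v t = 1) :
    1 ≤ ∫⁻ t in Ioo a b, ENNReal.ofReal |v t| := by
  rw [intervalIntegral.integral_of_le hab] at h
  calc (1 : ℝ≥0∞) = ‖∫ t in Ioc a b, v t‖ₑ := by rw [h]; simp
    _ ≤ ∫⁻ t in Ioc a b, ‖v t‖ₑ := enorm_integral_le_lintegral_enorm _
    _ = ∫⁻ t in Ioo a b, ENNReal.ofReal |v t| := by
        simp_rw [setLIntegral_congr Ioo_ae_eq_Ioc.symm, Real.enorm_eq_ofReal_abs]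

theorem pResistance_rpow_le_lintegral (hp : 1 < p) (hab : a ≤ b) (hA : Measurable A)
    {v : ℝ → ℝ} (hv : IntervalIntegrable v volume a b) (h1 : ∫ t in a..b, v t = 1) :
    pResistance p (volume.restrict (Ioo a b)) (fun t => ENNReal.ofReal (A t)) ^ (1 - p)
      ≤ ∫⁻ t in Ioo a b, ENNReal.ofReal (|v t| ^ p * A t) := by
  have hvm : AEMeasurable v (volume.restrict (Ioo a b)) :=
    (hv.1.mono_set Ioo_subset_Ioc_self).aestronglyMeasurable.aemeasurable
  rw [lintegral_ofReal_abs_rpow_mul_eq_pEnergy (by linarith)]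
  exact pResistance_rpow_one_sub_le_pEnergy hp hvm.abs.ennreal_ofReal
    hA.ennreal_ofReal.aemeasurable (ae_of_all _ fun _ => ENNReal.ofReal_ne_top)
    (one_le_lintegral_ofReal_abs hab h1)

theorem exists_bounded_profile (hp : 0 ≤ p) (hab : a ≤ b) {y : ℝ → ℝ≥0∞} (hy : Measurable y)
    {M : ℝ≥0∞} (hM : M ≠ ⊤) (hyM : ∀ t, y t ≤ M) (hc0 : ∫⁻ t in Ioo a b, y t ≠ 0)
    (hct : ∫⁻ t in Ioo a b, y t ≠ ⊤) :
    ∃ v : ℝ → ℝ, IntervalIntegrable v volume a b ∧ ∫ t in a..b, v t = 1 ∧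
      (∃ C : ℝ, ∀ t ∈ Ioo a b, |v t| ≤ C) ∧
      ∫⁻ t in Ioo a b, ENNReal.ofReal (|v t| ^ p * A t)
        = pEnergy p (volume.restrict (Ioo a b)) (fun t => ENNReal.ofReal (A t))
            (fun t => y t / ∫⁻ t in Ioo a b, y t) := by
  set c := ∫⁻ t in Ioo a b, y t
  set u : ℝ → ℝ≥0∞ := fun t => y t / c
  have huM : ∀ t, u t ≤ M / c := fun t => ENNReal.div_le_div_right (hyM t) c
  have huM_ne_top : M / c ≠ ⊤ := ENNReal.div_ne_top hM hc0
  have hu_ne_top : ∀ t, u t ≠ ⊤ := fun t => ne_top_of_le_ne_top huM_ne_top (huM t)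
  have hu1 : ∫⁻ t in Ioc a b, u t = 1 := by
    rw [← setLIntegral_congr Ioo_ae_eq_Ioc]
    simp only [u, div_eq_mul_inv]
    rw [lintegral_mul_const' _ _ (ENNReal.inv_ne_top.2 hc0), ENNReal.mul_inv_cancel hc0 hct]
  have hum : AEMeasurable u (volume.restrict (Ioc a b)) := (hy.div_const c).aemeasurable
  refine ⟨fun t => (u t).toReal, ?_, ?_, ⟨(M / c).toReal, fun t _ => ?_⟩, ?_⟩
  · rw [intervalIntegrable_iff_integrableOn_Ioc_of_le hab]
    exact integrable_toReal_of_lintegral_ne_top hum (by simp [hu1])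
  · rw [intervalIntegral.integral_of_le hab,
      integral_toReal hum (ae_of_all _ fun t => (hu_ne_top t).lt_top), hu1, ENNReal.toReal_one]
  · rw [abs_of_nonneg ENNReal.toReal_nonneg]
    exact ENNReal.toReal_mono huM_ne_top (huM t)
  · rw [lintegral_ofReal_abs_rpow_mul_eq_pEnergy hp]
    simp only [abs_of_nonneg ENNReal.toReal_nonneg, ENNReal.ofReal_toReal (hu_ne_top _), u]


theorem sInf_le_pResistance_rpow (hp : 1 < p) (hab : a ≤ b) (hA : Measurable A) {S : Set ℝ≥0∞}
    (hS : ∀ v : ℝ → ℝ, IntervalIntegrable v volume a b → ∫ t in a..b, v t = 1 →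
      (∃ C : ℝ, ∀ t ∈ Ioo a b, |v t| ≤ C) →
      ∫⁻ t in Ioo a b, ENNReal.ofReal (|v t| ^ p * A t) ≠ ⊤ →
      ∫⁻ t in Ioo a b, ENNReal.ofReal (|v t| ^ p * A t) ∈ S) :
    sInf S ≤
      pResistance p (volume.restrict (Ioo a b)) (fun t => ENNReal.ofReal (A t)) ^ (1 - p) := by
  set R := pResistance p (volume.restrict (Ioo a b)) (fun t => ENNReal.ofReal (A t))
  rcases eq_or_ne R 0 with hR | hR
  · rw [hR, ENNReal.zero_rpow_of_neg (by linarith)]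
    exact le_top
  set B : ℝ → ℝ≥0∞ := fun t => ENNReal.ofReal (A t) ^ (-(1 / (p - 1)))
  have hB : Measurable B := hA.ennreal_ofReal.pow_const _
  set c : ℕ → ℝ≥0∞ := fun k => ∫⁻ t in Ioo a b, min (B t) k
  have hc : Tendsto c atTop (𝓝 R) := tendsto_lintegral_min_natCast hB.aemeasurable
  refine ge_of_tendsto ((ENNReal.continuous_rpow_const.tendsto R).comp hc) ?_
  filter_upwards [hc.eventually_ne hR] with k hk0
  have hkt : c k ≠ ⊤ := by
    refine ne_top_of_le_ne_top (b := k * volume (Ioo a b))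
      (ENNReal.mul_ne_top (ENNReal.natCast_ne_top k) measure_Ioo_lt_top.ne) ?_
    exact (lintegral_mono fun t => min_le_right _ _).trans_eq (setLIntegral_const _ _)
  obtain ⟨v, hv, hv1, hvC, hvE⟩ := exists_bounded_profile (p := p) (A := A) (by linarith) hab
    (hB.min measurable_const) (ENNReal.natCast_ne_top k) (fun t => min_le_right _ _) hk0 hkt
  have hE : ∫⁻ t in Ioo a b, ENNReal.ofReal (|v t| ^ p * A t) ≤ c k ^ (1 - p) :=
    hvE ▸ pEnergy_div_lintegral_le hp (fun t => min_le_left _ _) hk0 hkt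
  have hEt : c k ^ (1 - p) ≠ ⊤ := by simp [hk0, hkt]
  exact (sInf_le (hS v hv hv1 hvC (ne_top_of_le_ne_top hEt hE))).trans hE

end Interval

theorem stmt17_general (p a b : ℝ) (hp : 1 < p) (hab : a < b)
    (A : ℝ → ℝ) (hAmeas : Measurable A) :
    sInf {E : ℝ≥0∞ | ∃ v' : ℝ → ℝ, IntervalIntegrable v' volume a b ∧
        (∫ t in a..b, v' t) = 1 ∧
        E = ∫⁻ t in Ioo a b, ENNReal.ofReal (|v' t| ^ p * A t) ∧ E ≠ ⊤}
      = (∫⁻ t in Ioo a b,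
          (ENNReal.ofReal (A t)) ^ (-(1 / (p - 1)))) ^ (1 - p) ∧
    sInf {E : ℝ≥0∞ | ∃ w' : ℝ → ℝ, IntervalIntegrable w' volume a b ∧
        (∫ t in a..b, w' t) = 1 ∧ (∃ C : ℝ, ∀ t ∈ Ioo a b, |w' t| ≤ C) ∧
        E = ∫⁻ t in Ioo a b, ENNReal.ofReal (|w' t| ^ p * A t)}
      = (∫⁻ t in Ioo a b,
          (ENNReal.ofReal (A t)) ^ (-(1 / (p - 1)))) ^ (1 - p) := by
  refine ⟨le_antisymm ?_ ?_, le_antisymm ?_ ?_⟩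
  · exact sInf_le_pResistance_rpow hp hab.le hAmeas
      fun v hv hv1 _ hfin => ⟨v, hv, hv1, rfl, hfin⟩
  · refine le_sInf ?_
    rintro E ⟨v, hv, hv1, rfl, -⟩
    exact pResistance_rpow_le_lintegral hp hab.le hAmeas hv hv1
  · exact sInf_le_pResistance_rpow hp hab.le hAmeas
      fun v hv hv1 hvC _ => ⟨v, hv, hv1, hvC, rfl⟩
  · refine le_sInf ?_
    rintro E ⟨v, hv, hv1, -, rfl⟩
    exact pResistance_rpow_le_lintegral hp hab.le hAmeas hv hv1

/-- Lipschitz profiles suffice.  The infimum of the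
weighted `p`-energy over absolutely continuous admissible profiles
(encoded by their derivatives: interval integrable `v'` with
`∫_a^b v' = 1`, and finite energy) equals the infimum over Lipschitz
admissible profiles (derivative bounded), and both equal
`(∫_a^b A^{-1/(p-1)})^{1-p}` in `ℝ≥0∞` (interpreted as `0` when the
resistance diverges, via the conventions of `ℝ≥0∞`-exponentiation). -/
theorem stmt17 (p a b : ℝ) (hp : 1 < p) (hab : a < b)
    (A : ℝ → ℝ) (hAmeas : Measurable A) (hA0 : ∀ t ∈ Ioo a b, 0 ≤ A t) :
    sInf {E : ℝ≥0∞ | ∃ v' : ℝ → ℝ, IntervalIntegrable v' volume a b ∧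
        (∫ t in a..b, v' t) = 1 ∧
        E = ∫⁻ t in Ioo a b, ENNReal.ofReal (|v' t| ^ p * A t) ∧ E ≠ ⊤}
      = (∫⁻ t in Ioo a b,
          (ENNReal.ofReal (A t)) ^ (-(1 / (p - 1)))) ^ (1 - p) ∧
    sInf {E : ℝ≥0∞ | ∃ w' : ℝ → ℝ, IntervalIntegrable w' volume a b ∧
        (∫ t in a..b, w' t) = 1 ∧ (∃ C : ℝ, ∀ t ∈ Ioo a b, |w' t| ≤ C) ∧
        E = ∫⁻ t in Ioo a b, ENNReal.ofReal (|w' t| ^ p * A t)}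
      = (∫⁻ t in Ioo a b,
          (ENNReal.ofReal (A t)) ^ (-(1 / (p - 1)))) ^ (1 - p) :=
  stmt17_general p a b hp hab A hAmeas
end
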